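/- arXiv:2504.00546 — 3 statements merged into one kernel-verified Lean document; each statement's English description precedes it below -/
import Mathlib

section
/- The four polynomials a2⁰ = I4 + Ĩ4/4 − 64·I2², b1⁰ = I2, b2⁰ = −I4/6 + Ĩ4/48 + (128/3)·I2², b3⁰ = I6/16 − 4·I2·I4 + I2·Ĩ4 + 512·I2³ in ℂ[z1,z2,z3,z4] are algebraically independent over ℂ. -/
open MvPolynomial Complex

/-- `I2 = z1²+z2²+z3²+z4²` -/
noncomputable def I2 : MvPolynomial (Fin 4) ℂ := ∑ i, X i ^ 2

/-- `I4 = Σ_{i<j} zi²zj²` -/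
noncomputable def I4 : MvPolynomial (Fin 4) ℂ :=
  ∑ p ∈ Finset.univ.filter (fun p : Fin 4 × Fin 4 => p.1 < p.2), X p.1 ^ 2 * X p.2 ^ 2

/-- `I6 = Σ_{i<j<k} zi²zj²zk²` -/
noncomputable def I6 : MvPolynomial (Fin 4) ℂ :=
  ∑ p ∈ Finset.univ.filter (fun p : Fin 4 × Fin 4 × Fin 4 => p.1 < p.2.1 ∧ p.2.1 < p.2.2),
    X p.1 ^ 2 * X p.2.1 ^ 2 * X p.2.2 ^ 2

/-- `Ĩ4 = z1z2z3z4` -/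
noncomputable def I4t : MvPolynomial (Fin 4) ℂ := ∏ i, X i

/-- `a2⁰ = I4 + Ĩ4/4 − 64·I2²` -/
noncomputable def a2q0 : MvPolynomial (Fin 4) ℂ := I4 + C (1 / 4 : ℂ) * I4t - C (64 : ℂ) * I2 ^ 2

/-- `b1⁰ = I2` -/
noncomputable def b1q0 : MvPolynomial (Fin 4) ℂ := I2

/-- `b2⁰ = −I4/6 + Ĩ4/48 + (128/3)·I2²` -/
noncomputable def b2q0 : MvPolynomial (Fin 4) ℂ :=
  -(C (1 / 6 : ℂ)) * I4 + C (1 / 48 : ℂ) * I4t + C (128 / 3 : ℂ) * I2 ^ 2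

/-- `b3⁰ = I6/16 − 4·I2·I4 + I2·Ĩ4 + 512·I2³` -/
noncomputable def b3q0 : MvPolynomial (Fin 4) ℂ :=
  C (1 / 16 : ℂ) * I6 - C (4 : ℂ) * I2 * I4 + I2 * I4t + C (512 : ℂ) * I2 ^ 3

/-!
Substituting `zᵢ²` for the variables of the elementary symmetric polynomials `e₁, …, e₄` gives
`I2, I4, I6, Ĩ4²`. The squares `zᵢ²` are algebraically independent, and so are `e₁, …, e₄`
(fundamental theorem of symmetric polynomials), hence so are `I2, I4, I6, Ĩ4²`. As `Ĩ4²` is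
transcendental over `ℂ[I2, I4, I6]`, so is `Ĩ4`, hence `I2, I4, I6, Ĩ4` are algebraically
independent. Finally `a2⁰, b1⁰, b2⁰, b3⁰` arise from `I2, I4, I6, Ĩ4` by a
triangular polynomial change of coordinates, which has a polynomial inverse.
-/

theorem Fin.snoc_comp_finSuccEquivLast_symm {α : Type*} {n : ℕ} (x : Fin n → α) (a : α) :
    (Fin.snoc x a : Fin (n + 1) → α) ∘ finSuccEquivLast.symm = fun o ↦ o.elim a x := by
  ext (_ | i) <;> simp

section AlgebraicIndependence

variable {R A : Type*} [CommRing R] [CommRing A] [Algebra R A]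

theorem Transcendental.of_pow [NoZeroDivisors R] {a : A} {k : ℕ}
    (h : Transcendental R (a ^ k)) : Transcendental R a :=
  fun ha ↦ h (ha.pow k)

theorem AlgebraicIndependent.snoc_of_snoc_pow [NoZeroDivisors A] {n k : ℕ} {x : Fin n → A}
    {a : A} (h : AlgebraicIndependent R (Fin.snoc x (a ^ k) : Fin (n + 1) → A)) :
    AlgebraicIndependent R (Fin.snoc x a : Fin (n + 1) → A) := by
  rw [← algebraicIndependent_equiv finSuccEquivLast.symm,
    Fin.snoc_comp_finSuccEquivLast_symm, AlgebraicIndependent.option_iff] at h ⊢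
  exact ⟨h.1, h.2.of_pow⟩

end AlgebraicIndependence

namespace MvPolynomial

variable (σ R : Type*) [CommRing R]

theorem algebraicIndependent_X_pow [Nontrivial R] {k : ℕ} (hk : k ≠ 0) :
    AlgebraicIndependent R fun i : σ ↦ (X i : MvPolynomial σ R) ^ k := by
  have hXk : Transcendental R (Polynomial.X ^ k : Polynomial R) :=
    Polynomial.transcendental _ (by simp [hk]) (by simp [one_mem])
  simpa only [Polynomial.aeval_X_pow] using
    (algebraicIndependent_X σ R).polynomial_aeval_of_transcendental fun _ ↦ hXk

theorem algebraicIndependent_esymm [Fintype σ] {n : ℕ} (hn : n ≤ Fintype.card σ) :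
    AlgebraicIndependent R fun i : Fin n ↦ esymm σ R (i + 1) := by
  rw [algebraicIndependent_iff_injective_aeval]
  intro p q hpq
  exact esymmAlgHom_injective R hn (Subtype.ext <| by rwa [esymmAlgHom_apply, esymmAlgHom_apply])

end MvPolynomial

theorem aeval_X_sq_esymm :
    (fun k : Fin 4 ↦ aeval (fun j ↦ (X j : MvPolynomial (Fin 4) ℂ) ^ 2) (esymm (Fin 4) ℂ (k + 1)))
      = ![I2, I4, I6, I4t ^ 2] := by
  ext1 k
  fin_cases k <;>
  simp [esymm_eq_multiset_esymm, Multiset.esymm, Multiset.powersetCard_coe, List.sublistsLen,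
    List.sublistsLenAux, I2, I4, I6, I4t, Fin.sum_univ_four, Fin.prod_univ_four,
    Finset.sum_filter, Fintype.sum_prod_type] <;> ring

theorem algebraicIndependent_invariants :
    AlgebraicIndependent ℂ (![I2, I4, I6, I4t] : Fin 4 → MvPolynomial (Fin 4) ℂ) := by
  have h := (algebraicIndependent_X_pow (Fin 4) ℂ two_ne_zero).aeval_of_algebraicIndependent
    (algebraicIndependent_esymm (Fin 4) ℂ le_rfl)
  have snoc_eq (a : MvPolynomial (Fin 4) ℂ) : Fin.snoc ![I2, I4, I6] a = ![I2, I4, I6, a] := by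
    simp [Matrix.Fin.snoc_vecCons]
  rw [aeval_X_sq_esymm, ← snoc_eq] at h
  rw [← snoc_eq]
  exact h.snoc_of_snoc_pow

/-- The variables `X 0, …, X 3` stand for `I2, I4, I6, Ĩ4`. -/
noncomputable def q0OfInvariants : Fin 4 → MvPolynomial (Fin 4) ℂ :=
  ![X 1 + C (1 / 4 : ℂ) * X 3 - C (64 : ℂ) * X 0 ^ 2,
    X 0,
    -(C (1 / 6 : ℂ)) * X 1 + C (1 / 48 : ℂ) * X 3 + C (128 / 3 : ℂ) * X 0 ^ 2,
    C (1 / 16 : ℂ) * X 2 - C (4 : ℂ) * X 0 * X 1 + X 0 * X 3 + C (512 : ℂ) * X 0 ^ 3]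

noncomputable def invariantsOfQ0 : Fin 4 → MvPolynomial (Fin 4) ℂ :=
  ![X 1,
    C (1 / 3 : ℂ) * X 0 + C (192 : ℂ) * X 1 ^ 2 - C (4 : ℂ) * X 2,
    C (16 : ℂ) * X 3 - C (64 / 3 : ℂ) * X 0 * X 1 - C (512 : ℂ) * X 1 * X 2
      + C (12288 : ℂ) * X 1 ^ 3,
    C (8 / 3 : ℂ) * X 0 + C (16 : ℂ) * X 2 - C (512 : ℂ) * X 1 ^ 2]

theorem aeval_invariantsOfQ0_q0OfInvariants :
    (fun i ↦ aeval invariantsOfQ0 (q0OfInvariants i)) = X := by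
  ext1 i
  fin_cases i <;> refine MvPolynomial.funext fun z ↦ ?_ <;>
    simp [q0OfInvariants, invariantsOfQ0] <;> ring

theorem algebraicIndependent_q0OfInvariants : AlgebraicIndependent ℂ q0OfInvariants :=
  .of_aeval (aeval_invariantsOfQ0_q0OfInvariants ▸ algebraicIndependent_X _ _)

theorem aeval_invariants_q0OfInvariants :
    (fun i ↦ aeval (![I2, I4, I6, I4t] : Fin 4 → MvPolynomial (Fin 4) ℂ) (q0OfInvariants i)) =
      ![a2q0, b1q0, b2q0, b3q0] := by
  ext1 i
  fin_cases i <;> simp [q0OfInvariants, a2q0, b1q0, b2q0, b3q0]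

/-- The four polynomials `a2⁰, b1⁰, b2⁰, b3⁰` are algebraically independent over ℂ. -/
theorem stmt_2 :
    AlgebraicIndependent ℂ (![a2q0, b1q0, b2q0, b3q0] : Fin 4 → MvPolynomial (Fin 4) ℂ) := by
  rw [← aeval_invariants_q0OfInvariants]
  exact algebraicIndependent_invariants.aeval_of_algebraicIndependent
    algebraicIndependent_q0OfInvariants
end

section
/- In ℂ[z1,z2,z3,z4], the determinant of the 4×4 Jacobian matrix whose (i,j) entry is ∂F_i/∂z_j, where (F₁,F₂,F₃,F₄) = (a2⁰, b1⁰, b2⁰, b3⁰) with a2⁰ = I4 + Ĩ4/4 − 64·I2², b1⁰ = I2, b2⁰ = −I4/6 + Ĩ4/48 + (128/3)·I2², b3⁰ = I6/16 − 4·I2·I4 + I2·Ĩ4 + 512·I2³, equals (1/32)·∏_{1≤i<j≤4} (zᵢ² − zⱼ²). -/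
open MvPolynomial Complex

noncomputable def S4 : MvPolynomial (Fin 4) ℂ := X 0^2 + X 1^2 + X 2^2 + X 3^2

noncomputable def Q4 : MvPolynomial (Fin 4) ℂ :=
  X 0^2*X 1^2 + X 0^2*X 2^2 + X 0^2*X 3^2 + X 1^2*X 2^2 + X 1^2*X 3^2 + X 2^2*X 3^2

noncomputable def T4 : MvPolynomial (Fin 4) ℂ := X 0*X 1*X 2*X 3

noncomputable def R4 : MvPolynomial (Fin 4) ℂ :=
  X 0^2*X 1^2*X 2^2 + X 0^2*X 1^2*X 3^2 + X 0^2*X 2^2*X 3^2 + X 1^2*X 2^2*X 3^2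

noncomputable def G0 : MvPolynomial (Fin 4) ℂ := C (4:ℂ) * Q4 + T4 - C (256:ℂ) * S4^2
noncomputable def G2 : MvPolynomial (Fin 4) ℂ := T4 + C (2048:ℂ) * S4^2 - C (8:ℂ) * Q4
noncomputable def G3 : MvPolynomial (Fin 4) ℂ :=
  R4 + C (16:ℂ) * S4 * T4 + C (8192:ℂ) * S4^3 - C (64:ℂ) * S4 * Q4

noncomputable def Vm : Matrix (Fin 4) (Fin 4) (MvPolynomial (Fin 4) ℂ) :=
  !![C (2:ℂ) * X 0, C (2:ℂ) * X 1, C (2:ℂ) * X 2, C (2:ℂ) * X 3;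
     C (2:ℂ) * X 0 * (X 1^2 + X 2^2 + X 3^2), C (2:ℂ) * X 1 * (X 0^2 + X 2^2 + X 3^2),
       C (2:ℂ) * X 2 * (X 0^2 + X 1^2 + X 3^2), C (2:ℂ) * X 3 * (X 0^2 + X 1^2 + X 2^2);
     C (2:ℂ) * X 0 * (X 1^2*X 2^2 + X 1^2*X 3^2 + X 2^2*X 3^2),
       C (2:ℂ) * X 1 * (X 0^2*X 2^2 + X 0^2*X 3^2 + X 2^2*X 3^2),
       C (2:ℂ) * X 2 * (X 0^2*X 1^2 + X 0^2*X 3^2 + X 1^2*X 3^2),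
       C (2:ℂ) * X 3 * (X 0^2*X 1^2 + X 0^2*X 2^2 + X 1^2*X 2^2);
     X 1*X 2*X 3, X 0*X 2*X 3, X 0*X 1*X 3, X 0*X 1*X 2]

noncomputable def Am : Matrix (Fin 4) (Fin 4) (MvPolynomial (Fin 4) ℂ) :=
  !![-(C (512:ℂ) * S4), C (4:ℂ), 0, 1;
     1, 0, 0, 0;
     C (4096:ℂ) * S4, -(C (8:ℂ)), 0, 1;
     C (16:ℂ) * T4 + C (24576:ℂ) * S4^2 - C (64:ℂ) * Q4, -(C (64:ℂ) * S4), 1, C (16:ℂ) * S4]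

noncomputable def Dm : Matrix (Fin 4) (Fin 4) (MvPolynomial (Fin 4) ℂ) :=
  !![C (1/4 : ℂ), 0, 0, 0; 0, 1, 0, 0; 0, 0, C (1/48 : ℂ), 0; 0, 0, 0, C (1/16 : ℂ)]

set_option maxHeartbeats 1000000 in
lemma det4 (M : Matrix (Fin 4) (Fin 4) (MvPolynomial (Fin 4) ℂ)) : M.det =
    M 0 0*M 1 1*M 2 2*M 3 3 - M 0 0*M 1 1*M 2 3*M 3 2 - M 0 0*M 1 2*M 2 1*M 3 3 + M 0 0*M 1 2*M 2 3*M 3 1 + M 0 0*M 1 3*M 2 1*M 3 2 - M 0 0*M 1 3*M 2 2*M 3 1 - M 0 1*M 1 0*M 2 2*M 3 3 + M 0 1*M 1 0*M 2 3*M 3 2 + M 0 1*M 1 2*M 2 0*M 3 3 - M 0 1*M 1 2*M 2 3*M 3 0 - M 0 1*M 1 3*M 2 0*M 3 2 + M 0 1*M 1 3*M 2 2*M 3 0 + M 0 2*M 1 0*M 2 1*M 3 3 - M 0 2*M 1 0*M 2 3*M 3 1 - M 0 2*M 1 1*M 2 0*M 3 3 + M 0 2*M 1 1*M 2 3*M 3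 0 + M 0 2*M 1 3*M 2 0*M 3 1 - M 0 2*M 1 3*M 2 1*M 3 0 - M 0 3*M 1 0*M 2 1*M 3 2 + M 0 3*M 1 0*M 2 2*M 3 1 + M 0 3*M 1 1*M 2 0*M 3 2 - M 0 3*M 1 1*M 2 2*M 3 0 - M 0 3*M 1 2*M 2 0*M 3 1 + M 0 3*M 1 2*M 2 1*M 3 0 := by
  simp [Matrix.det_succ_row_zero, Fin.sum_univ_succ,
    show (Fin.succ 2 : Fin 4) = 3 from rfl, show (Fin.castSucc 2 : Fin 4) = 2 from rfl,
    show Fin.succAbove (2 : Fin 4) (2 : Fin 3) = 3 from rfl,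
    show Fin.succAbove (1 : Fin 4) (2 : Fin 3) = 3 from rfl,
    show Fin.succAbove (0 : Fin 4) (2 : Fin 3) = 3 from rfl,
    show Fin.succAbove (3 : Fin 4) (2 : Fin 3) = 2 from rfl]
  ring

lemma entry_lemmas : True := trivial

set_option maxHeartbeats 400000 in
lemma detD : Dm.det = C (1/3072 : ℂ) := by
  rw [det4]
  simp only [Dm, Matrix.cons_val_zero, Matrix.cons_val_one, Matrix.cons_val_two,
    Matrix.cons_val_three, Matrix.head_cons, Matrix.tail_cons, Matrix.head_fin_const,
    Matrix.cons_val', Matrix.cons_val_fin_one, Matrix.empty_val', Matrix.of_apply]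
  rw [show (C (1/4:ℂ) : MvPolynomial (Fin 4) ℂ) * 1 * C (1/48 : ℂ) * C (1/16 : ℂ)
      = C (1/3072 : ℂ) by rw [mul_one, ← C_mul, ← C_mul]; norm_num]
  ring

set_option maxHeartbeats 1000000 in
lemma detA : Am.det = C (12 : ℂ) := by
  rw [det4]
  simp only [Am, S4, Q4, T4, Matrix.cons_val_zero, Matrix.cons_val_one, Matrix.cons_val_two,
    Matrix.cons_val_three, Matrix.head_cons, Matrix.tail_cons, Matrix.head_fin_const,
    Matrix.cons_val', Matrix.cons_val_fin_one, Matrix.empty_val', Matrix.of_apply, map_ofNat]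
  ring

set_option maxHeartbeats 1000000 in
lemma detV : Vm.det = C (8 : ℂ) *
    ((X 0^2 - X 1^2)*(X 0^2 - X 2^2)*(X 0^2 - X 3^2)*(X 1^2 - X 2^2)
      *(X 1^2 - X 3^2)*(X 2^2 - X 3^2)) := by
  rw [det4]
  simp only [Vm, Matrix.cons_val_zero, Matrix.cons_val_one, Matrix.cons_val_two,
    Matrix.cons_val_three, Matrix.head_cons, Matrix.tail_cons, Matrix.head_fin_const,
    Matrix.cons_val', Matrix.cons_val_fin_one, Matrix.empty_val', Matrix.of_apply, map_ofNat]
  ring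

lemma pderiv_num (i : Fin 4) (n : ℕ) [n.AtLeastTwo] :
    MvPolynomial.pderiv i (OfNat.ofNat n : MvPolynomial (Fin 4) ℂ) = 0 := by
  rw [← map_ofNat (C : ℂ →+* MvPolynomial (Fin 4) ℂ) n]; exact pderiv_C

set_option maxHeartbeats 2000000 in
lemma hMAV : (Matrix.of fun i j : Fin 4 => MvPolynomial.pderiv j (![G0, S4, G2, G3] i))
    = Am * Vm := by
  refine Matrix.ext fun i j => ?_
  fin_cases i <;> fin_cases j <;>
    · simp [Matrix.mul_apply, Fin.sum_univ_four, Am, Vm, Matrix.of_apply,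
        Matrix.cons_val_zero, Matrix.cons_val_one, Matrix.cons_val_two, Matrix.cons_val_three,
        Matrix.head_cons, Matrix.tail_cons, Matrix.head_fin_const, Matrix.cons_val',
        Matrix.cons_val_fin_one, Matrix.empty_val',
        G0, G2, G3, S4, Q4, T4, R4,
        map_add, map_sub, map_neg, pderiv_C_mul, pderiv_mul, pderiv_pow, pderiv_C, pderiv_X,
        pderiv_num, pderiv_one, Nat.cast_ofNat, Fin.isValue, -map_ofNat]
      try simp (config := { decide := true }) only [Pi.single_apply, if_true, if_false,
        mul_zero, zero_mul, mul_one, one_mul, add_zero, zero_add, sub_zero, zero_sub, neg_zero,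
        map_ofNat, Nat.cast_ofNat]
      try ring

set_option maxHeartbeats 1000000 in
/-- The Jacobian determinant of `(a2⁰, b1⁰, b2⁰, b3⁰)` with respect to `(z1,z2,z3,z4)` equals
`(1/32)·∏_{i<j}(zᵢ² − zⱼ²)`. -/
theorem stmt_3 :
    (Matrix.of fun i j : Fin 4 => MvPolynomial.pderiv j (![a2q0, b1q0, b2q0, b3q0] i)).det
      = C (1 / 32 : ℂ) *
          ∏ p ∈ Finset.univ.filter (fun p : Fin 4 × Fin 4 => p.1 < p.2),
            (X p.1 ^ 2 - X p.2 ^ 2) := by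
  have key : ∀ (a b : ℂ) (p : MvPolynomial (Fin 4) ℂ), C a * (C b * p) = C (a*b) * p := by
    intro a b p; rw [← mul_assoc, ← C_mul]
  have hI4 : I4 = Q4 := by
    rw [I4, Q4, show (Finset.univ.filter (fun p : Fin 4 × Fin 4 => p.1 < p.2)) =
      ({(0,1),(0,2),(0,3),(1,2),(1,3),(2,3)} : Finset (Fin 4 × Fin 4)) from by decide]
    simp (config := { decide := true }) [Finset.sum_insert]
    ring
  have hI6 : I6 = R4 := by
    rw [I6, R4, show (Finset.univ.filter
        (fun p : Fin 4 × Fin 4 × Fin 4 => p.1 < p.2.1 ∧ p.2.1 < p.2.2)) =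
      ({(0,1,2),(0,1,3),(0,2,3),(1,2,3)} : Finset (Fin 4 × Fin 4 × Fin 4)) from by decide]
    simp (config := { decide := true }) [Finset.sum_insert]
    ring
  have hI2 : I2 = S4 := by rw [I2, S4, Fin.sum_univ_four]
  have hI4t : I4t = T4 := by rw [I4t, T4, Fin.prod_univ_four]
  have hprod : (∏ p ∈ Finset.univ.filter (fun p : Fin 4 × Fin 4 => p.1 < p.2),
      (X p.1 ^ 2 - X p.2 ^ 2) : MvPolynomial (Fin 4) ℂ)
      = (X 0^2 - X 1^2)*(X 0^2 - X 2^2)*(X 0^2 - X 3^2)*(X 1^2 - X 2^2)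
        *(X 1^2 - X 3^2)*(X 2^2 - X 3^2) := by
    rw [show (Finset.univ.filter (fun p : Fin 4 × Fin 4 => p.1 < p.2)) =
      ({(0,1),(0,2),(0,3),(1,2),(1,3),(2,3)} : Finset (Fin 4 × Fin 4)) from by decide]
    simp (config := { decide := true }) [Finset.prod_insert]
    ring
  have ha2 : a2q0 = C (1/4 : ℂ) * G0 := by
    have h1 : (C (1/4 : ℂ) : MvPolynomial (Fin 4) ℂ) * C (4:ℂ) = 1 := by
      rw [← C_mul]; norm_num
    have h2 : (C (1/4 : ℂ) : MvPolynomial (Fin 4) ℂ) * C (256:ℂ) = C (64:ℂ) := by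
      rw [← C_mul]; norm_num
    rw [a2q0, hI4, hI2, hI4t, G0]
    linear_combination (-Q4) * h1 + (S4^2) * h2
  have hb2 : b2q0 = C (1/48 : ℂ) * G2 := by
    have h1 : (C (1/48 : ℂ) : MvPolynomial (Fin 4) ℂ) * C (2048:ℂ) = C (128/3 : ℂ) := by
      rw [← C_mul]; norm_num
    have h2 : (C (1/48 : ℂ) : MvPolynomial (Fin 4) ℂ) * C (8:ℂ) = C (1/6 : ℂ) := by
      rw [← C_mul]; norm_num
    rw [b2q0, hI4, hI2, hI4t, G2]
    linear_combination Q4 * h2 - S4^2 * h1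
  have hb3 : b3q0 = C (1/16 : ℂ) * G3 := by
    have h1 : (C (1/16 : ℂ) : MvPolynomial (Fin 4) ℂ) * C (16:ℂ) = 1 := by
      rw [← C_mul]; norm_num
    have h2 : (C (1/16 : ℂ) : MvPolynomial (Fin 4) ℂ) * C (8192:ℂ) = C (512:ℂ) := by
      rw [← C_mul]; norm_num
    have h3 : (C (1/16 : ℂ) : MvPolynomial (Fin 4) ℂ) * C (64:ℂ) = C (4:ℂ) := by
      rw [← C_mul]; norm_num
    rw [b3q0, hI6, hI4, hI2, hI4t, G3]
    linear_combination (-(S4*T4)) * h1 - S4^3 * h2 + (S4*Q4) * h3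
  have hb1 : b1q0 = S4 := by rw [b1q0, hI2]
  have hDM : (Matrix.of fun i j : Fin 4 => MvPolynomial.pderiv j (![a2q0, b1q0, b2q0, b3q0] i))
      = Dm * (Matrix.of fun i j : Fin 4 => MvPolynomial.pderiv j (![G0, S4, G2, G3] i)) := by
    refine Matrix.ext fun i j => ?_
    fin_cases i <;> fin_cases j <;>
      · simp [Matrix.mul_apply, Fin.sum_univ_four, Dm, Matrix.of_apply,
          Matrix.cons_val_zero, Matrix.cons_val_one, Matrix.cons_val_two, Matrix.cons_val_three,
          Matrix.head_cons, Matrix.tail_cons, Matrix.head_fin_const, Matrix.cons_val',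
          Matrix.cons_val_fin_one, Matrix.empty_val',
          ha2, hb1, hb2, hb3, pderiv_C_mul, zero_mul, mul_zero, add_zero, zero_add, one_mul]
  rw [hDM, hMAV, ← Matrix.mul_assoc, Matrix.det_mul, Matrix.det_mul, detD, detA, detV, hprod,
    ← mul_assoc, ← mul_assoc, ← C_mul, ← C_mul]
  norm_num
  try ring
end

section
/- In ℂ[z1,z2,z3,z4], the determinant of the 4×4 Jacobian matrix whose (i,j) entry is ∂F_i/∂z_j, where (F₁,F₂,F₃,F₄) = (I2, I4, I6, Ĩ4), equals 8·∏_{1≤i<j≤4} (zᵢ² − zⱼ²). -/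
open MvPolynomial Complex

set_option maxHeartbeats 2000000 in
lemma mat_eq : (Matrix.of fun i j : Fin 4 => MvPolynomial.pderiv j (![I2, I4, I6, I4t] i)) =
    !![2 * X 0, 2 * X 1, 2 * X 2, 2 * X 3;
       2 * X 0 * (X 1^2 + X 2^2 + X 3^2), 2 * X 1 * (X 0^2 + X 2^2 + X 3^2),
         2 * X 2 * (X 0^2 + X 1^2 + X 3^2), 2 * X 3 * (X 0^2 + X 1^2 + X 2^2);
       2 * X 0 * (X 1^2*X 2^2 + X 1^2*X 3^2 + X 2^2*X 3^2),
         2 * X 1 * (X 0^2*X 2^2 + X 0^2*X 3^2 + X 2^2*X 3^2),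
         2 * X 2 * (X 0^2*X 1^2 + X 0^2*X 3^2 + X 1^2*X 3^2),
         2 * X 3 * (X 0^2*X 1^2 + X 0^2*X 2^2 + X 1^2*X 2^2);
       X 1 * X 2 * X 3, X 0 * X 2 * X 3, X 0 * X 1 * X 3, X 0 * X 1 * X 2] := by
  funext i j
  simp only [I2, I4, I6, I4t,
    show (Finset.univ.filter (fun p : Fin 4 × Fin 4 => p.1 < p.2)) = {(0,1),(0,2),(0,3),(1,2),(1,3),(2,3)} from by decide,
    show (Finset.univ.filter (fun p : Fin 4 × Fin 4 × Fin 4 => p.1 < p.2.1 ∧ p.2.1 < p.2.2)) = {(0,1,2),(0,1,3),(0,2,3),(1,2,3)} from by decide]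
  fin_cases i <;> fin_cases j <;>
    simp [Fin.sum_univ_four, Fin.prod_univ_four, Finset.sum_insert, pderiv_X,
      Pi.single_apply] <;> ring


lemma det4_s16 {R : Type*} [CommRing R] (a b c d e f g h i j k l m n o p : R) :
    (!![a,b,c,d; e,f,g,h; i,j,k,l; m,n,o,p] : Matrix (Fin 4) (Fin 4) R).det
      = a*f*k*p - a*f*l*o - a*g*j*p + a*g*l*n + a*h*j*o - a*h*k*n
      - b*e*k*p + b*e*l*o + b*g*i*p - b*g*l*m - b*h*i*o + b*h*k*m
      + c*e*j*p - c*e*l*n - c*f*i*p + c*f*l*m + c*h*i*n - c*h*j*m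
      - d*e*j*o + d*e*k*n + d*f*i*o - d*f*k*m - d*g*i*n + d*g*j*m := by
  simp [Matrix.det_succ_row_zero, Fin.sum_univ_succ,
    show Fin.succAbove (2:Fin 4) (2:Fin 3) = 3 from rfl,
    show Fin.succAbove (1:Fin 4) (2:Fin 3) = 3 from rfl,
    show Fin.succAbove (3:Fin 4) (2:Fin 3) = 2 from rfl,
    show Fin.castSucc (2:Fin 3) = (2:Fin 4) from rfl]
  ring

set_option maxHeartbeats 4000000 in
/-- The Jacobian determinant of `(I2, I4, I6, Ĩ4)` with respect to `(z1,z2,z3,z4)` equals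
`8·∏_{i<j}(zᵢ² − zⱼ²)`. -/
theorem stmt_16 :
    (Matrix.of fun i j : Fin 4 => MvPolynomial.pderiv j (![I2, I4, I6, I4t] i)).det
      = C (8 : ℂ) *
          ∏ p ∈ Finset.univ.filter (fun p : Fin 4 × Fin 4 => p.1 < p.2),
            (X p.1 ^ 2 - X p.2 ^ 2) := by
  have hprod : (∏ p ∈ Finset.univ.filter (fun p : Fin 4 × Fin 4 => p.1 < p.2),
      (X p.1 ^ 2 - X p.2 ^ 2) : MvPolynomial (Fin 4) ℂ)
      = (X 0^2 - X 1^2) * ((X 0^2 - X 2^2) * ((X 0^2 - X 3^2) * ((X 1^2 - X 2^2) *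
          ((X 1^2 - X 3^2) * (X 2^2 - X 3^2))))) := by
    rw [show (Finset.univ.filter (fun p : Fin 4 × Fin 4 => p.1 < p.2))
        = {(0,1),(0,2),(0,3),(1,2),(1,3),(2,3)} from by decide,
      Finset.prod_insert (by decide), Finset.prod_insert (by decide),
      Finset.prod_insert (by decide), Finset.prod_insert (by decide),
      Finset.prod_insert (by decide), Finset.prod_singleton]
  rw [mat_eq, det4_s16, hprod, show (C (8:ℂ) : MvPolynomial (Fin 4) ℂ) = 8 from by simp [map_ofNat]]
  ring
end
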